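/- Consider Rule 2 on a ring of size n under the sequential update mode μ = (n-1, n-2, ..., 1, 0). For every initial configuration x ∈ {0,1}^n, there exists a time t such that applying t full sequential steps starting from x yields the all-zeros configuration 0^n. -/

import Mathlib

/-- Single-cell update: replace the state of cell `i` by the local rule applied
to its neighborhood on the ring `ZMod n`. -/
def eupdate (n : ℕ) (f : Bool → Bool → Bool → Bool) (x : ZMod n → Bool) (i : ZMod n) :
    ZMod n → Bool :=
  Function.update x i (f (x (i - 1)) (x i) (x (i + 1)))

/-- Synchronous (parallel) step. -/
def parStep (n : ℕ) (f : Bool → Bool → Bool → Bool) (x : ZMod n → Bool) : ZMod n → Bool :=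
  fun i => f (x (i - 1)) (x i) (x (i + 1))

/-- `x` is a fixed point of the parallel dynamics. -/
def IsFixedConfig (n : ℕ) (f : Bool → Bool → Bool → Bool) (x : ZMod n → Bool) : Prop :=
  ∀ i : ZMod n, f (x (i - 1)) (x i) (x (i + 1)) = x i

/-- One full sequential step under the sequential update mode `μ`
(a permutation of the cells): update cells one at a time in the order
`μ 0, μ 1, …, μ (n-1)`. -/
def seqStep (n : ℕ) (f : Bool → Bool → Bool → Bool) (μ : Fin n ≃ ZMod n)
    (x : ZMod n → Bool) : ZMod n → Bool :=
  (List.finRange n).foldl (fun y k => eupdate n f y (μ k)) x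

/-- One full sequential step under the descending order `(n-1, n-2, …, 0)`. -/
def seqStepDesc (n : ℕ) (f : Bool → Bool → Bool → Bool) (x : ZMod n → Bool) : ZMod n → Bool :=
  ((List.range n).reverse).foldl (fun y k => eupdate n f y (k : ZMod n)) x

/-- One full sequential step under the ascending order `(0, 1, …, n-1)`. -/
def seqStepAsc (n : ℕ) (f : Bool → Bool → Bool → Bool) (x : ZMod n → Bool) : ZMod n → Bool :=
  (List.range n).foldl (fun y k => eupdate n f y (k : ZMod n)) x

def rule2 : Bool → Bool → Bool → Bool
  | true, true, true => false
  | true, true, false => false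
  | true, false, true => false
  | true, false, false => false
  | false, true, true => false
  | false, true, false => false
  | false, false, true => true
  | false, false, false => false

/-!
Rule 2 can only turn a cell on when its left neighbour is off and its right neighbour is on.
In the descending sweep the right neighbour of a cell `i ≥ 1` has already been updated, so a
cell that ends up on forces every cell to its right, up to `n - 1`, to end up on as well. Cell `0`
is updated last, with left neighbour `n - 1` and right neighbour `1` both in their new state; if
the new cell `1` is on then so is the new cell `n - 1`, and either way cell `0` ends up off.
In the next sweep this off cell `0` is the right neighbour of the first cell `n - 1` to be
updated, and the zero then propagates leftwards through the whole ring.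
-/

section

variable {n : ℕ} {f : Bool → Bool → Bool → Bool}

lemma eupdate_self (x : ZMod n → Bool) (i : ZMod n) :
    eupdate n f x i i = f (x (i - 1)) (x i) (x (i + 1)) :=
  Function.update_self ..

lemma eupdate_of_ne (x : ZMod n → Bool) {i j : ZMod n} (h : j ≠ i) : eupdate n f x i j = x j :=
  Function.update_of_ne h ..

/-- The first `k` updates of the descending sweep, i.e. those of the cells `n - 1, …, n - k`. -/
def descSweep (n : ℕ) (f : Bool → Bool → Bool → Bool) : ℕ → (ZMod n → Bool) → ZMod n → Bool
  | 0, x => x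
  | k + 1, x => eupdate n f (descSweep n f k x) ((n - 1 - k : ℕ) : ZMod n)

lemma seqStepDesc_eq_descSweep (x : ZMod n → Bool) : seqStepDesc n f x = descSweep n f n x := by
  have foldl_eq (k : ℕ) : (List.range k).foldl
      (fun y j => eupdate n f y ((n - 1 - j : ℕ) : ZMod n)) x = descSweep n f k x := by
    induction k with
    | zero => rfl
    | succ k ih => simp [List.range_succ, descSweep, ih]
  rw [← foldl_eq, seqStepDesc, List.range_eq_range', List.reverse_range']
  simp only [List.pure_def, List.bind_eq_flatMap, ← List.map_eq_flatMap, List.map_map,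
    List.foldl_map, Function.comp_apply, zero_add, List.range_eq_range']

lemma natCast_sub_one_sub_add_one {k : ℕ} (hk : k < n) :
    ((n - 1 - k : ℕ) : ZMod n) + 1 = ((n - k : ℕ) : ZMod n) := by
  rw [← Nat.cast_succ]
  congr 1
  omega

lemma descSweep_eq_false (hright : ∀ a b, f a b false = false) {z : ZMod n → Bool}
    (hz : z 0 = false) {k : ℕ} (hk : k ≤ n) {j : ℕ} (hj₁ : n - k ≤ j) (hj₂ : j ≤ n) :
    descSweep n f k z j = false := by
  induction k generalizing j with
  | zero => rwa [show j = n by omega, ZMod.natCast_self]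
  | succ k ih =>
    simp only [descSweep]
    by_cases hj : (j : ZMod n) = ((n - 1 - k : ℕ) : ZMod n)
    · rw [hj, eupdate_self, natCast_sub_one_sub_add_one hk, ih (by omega) le_rfl (by omega),
        hright]
    · have : j ≠ n - 1 - k := fun h => hj (by rw [h])
      rw [eupdate_of_ne _ hj]
      exact ih (by omega) (by omega) hj₂

lemma descSweep_last_eq_true (hright : ∀ a b, f a b false = false) {x : ZMod n → Bool}
    {k : ℕ} (hk : k ≤ n) {j : ℕ} (hj₁ : n - k ≤ j) (hj₂ : j < n)
    (h : descSweep n f k x j = true) : descSweep n f k x ((n - 1 : ℕ) : ZMod n) = true := by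
  induction k generalizing j with
  | zero => omega
  | succ k ih =>
    simp only [descSweep] at h ⊢
    by_cases hj : (j : ZMod n) = ((n - 1 - k : ℕ) : ZMod n)
    · rw [hj, eupdate_self, natCast_sub_one_sub_add_one hk] at h
      have hnext : descSweep n f k x ((n - k : ℕ) : ZMod n) = true := by
        cases hc : descSweep n f k x ((n - k : ℕ) : ZMod n)
        · rwa [hc, hright] at h
        · rfl
      by_cases hlast : ((n - 1 : ℕ) : ZMod n) = ((n - 1 - k : ℕ) : ZMod n)
      · rwa [hlast, eupdate_self, natCast_sub_one_sub_add_one hk]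
      · have hk0 : k ≠ 0 := by rintro rfl; exact hlast rfl
        rw [eupdate_of_ne _ hlast]
        exact ih (by omega) le_rfl (by omega) hnext
    · have : j ≠ n - 1 - k := fun h => hj (by rw [h])
      rw [eupdate_of_ne _ hj] at h
      have hlast : ((n - 1 : ℕ) : ZMod n) ≠ ((n - 1 - k : ℕ) : ZMod n) := fun e => by
        have := congrArg ZMod.val e
        rw [ZMod.val_cast_of_lt (by omega), ZMod.val_cast_of_lt (by omega)] at this
        omega
      rw [eupdate_of_ne _ hlast]
      exact ih (by omega) (by omega) hj₂ h

lemma seqStepDesc_apply_zero (hn : 0 < n) (hleft : ∀ b c, f true b c = false)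
    (hright : ∀ a b, f a b false = false) (x : ZMod n → Bool) : seqStepDesc n f x 0 = false := by
  obtain ⟨m, rfl⟩ : ∃ m, n = m + 1 := ⟨n - 1, by omega⟩
  rw [seqStepDesc_eq_descSweep]
  simp only [descSweep, Nat.add_sub_cancel, Nat.sub_self, Nat.cast_zero, eupdate_self]
  have hl : (0 : ZMod (m + 1)) - 1 = (m : ℕ) := by
    have : ((m : ℕ) : ZMod (m + 1)) + 1 = 0 := by exact_mod_cast ZMod.natCast_self (m + 1)
    rw [eq_sub_of_add_eq this]
  rw [hl, zero_add]
  cases h1 : descSweep (m + 1) f m x 1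
  · exact hright _ _
  · have hlast : descSweep (m + 1) f m x (m : ℕ) = true := by
      rcases m.eq_zero_or_pos with rfl | hm
      · convert h1 using 2
        exact Subsingleton.elim (α := ZMod 1) _ _
      · have := descSweep_last_eq_true (n := m + 1) (k := m) (j := 1) hright (by omega)
          (by omega) (by omega) (by rwa [Nat.cast_one])
        rwa [Nat.add_sub_cancel] at this
    rw [hlast, hleft]

lemma seqStepDesc_eq_false (hn : 0 < n) (hright : ∀ a b, f a b false = false)
    {z : ZMod n → Bool} (hz : z 0 = false) : seqStepDesc n f z = fun _ => false := by
  have : NeZero n := ⟨hn.ne'⟩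
  funext i
  rw [seqStepDesc_eq_descSweep, ← ZMod.natCast_zmod_val i]
  exact descSweep_eq_false hright hz le_rfl (by omega) (ZMod.val_lt i).le

end

lemma rule2_left_true (b c : Bool) : rule2 true b c = false := by
  cases b <;> cases c <;> rfl

lemma rule2_right_false (a b : Bool) : rule2 a b false = false := by
  cases a <;> cases b <;> rfl

theorem rule2_desc_converges (n : ℕ) (hn : 0 < n) (x : ZMod n → Bool) :
    ∃ t : ℕ, (seqStepDesc n rule2)^[t] x = fun _ => false := by
  refine ⟨2, ?_⟩
  rw [Function.iterate_succ_apply', Function.iterate_one]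
  exact seqStepDesc_eq_false hn rule2_right_false
    (seqStepDesc_apply_zero hn rule2_left_true rule2_right_false x)
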